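/- (Derivative inequality in the proof of Theorem 5.1) Along the modified error dynamics, for all t ≥ 0, d/dt V*(e(t), W̃(t), e_L(t), x̃(t)) ≤ −λ_min(R) ‖e(t)‖₂² − η^{-1} κ λ_min(R) ‖e_L(t)‖₂² − 2ξ κ^{-1} λ_min(R)² λ_max(P)^{-1} (1 − ξ) ‖x̃(t)‖₂² ≤ 0. -/

import Mathlib

open Matrix Filter

noncomputable section

/-- Euclidean norm ‖·‖₂ of a vector. -/
def norm2 {n : ℕ} (v : Fin n → ℝ) : ℝ := Real.sqrt (∑ i, v i ^ 2)

/-- Supremum (infinity) norm ‖·‖_∞ of a vector (the sup norm on `Fin n → ℝ`). -/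
def normInf {n : ℕ} (v : Fin n → ℝ) : ℝ := ‖v‖

/-- Frobenius norm ‖·‖_F of a matrix. -/
def normF {N m : ℕ} (W : Matrix (Fin N) (Fin m) ℝ) : ℝ := Real.sqrt (∑ i, ∑ j, W i j ^ 2)

/-- Smallest eigenvalue λ_min of a real symmetric (Hermitian) matrix. -/
def lamMin {n : ℕ} {A : Matrix (Fin n) (Fin n) ℝ} (hA : A.IsHermitian) : ℝ := ⨅ i, hA.eigenvalues i

/-- Largest eigenvalue λ_max of a real symmetric (Hermitian) matrix. -/
def lamMax {n : ℕ} {A : Matrix (Fin n) (Fin n) ℝ} (hA : A.IsHermitian) : ℝ := ⨆ i, hA.eigenvalues i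

/-- A real square matrix is Hurwitz if every (complex) eigenvalue has negative real part. -/
def Hurwitz {n : ℕ} (A : Matrix (Fin n) (Fin n) ℝ) : Prop :=
  ∀ μ : ℂ, (A.map Complex.ofReal).charpoly.IsRoot μ → μ.re < 0

/-- The Lyapunov function V(e, W̃) = eᵀ P e + γ⁻¹ tr((W̃ Λ^{1/2})ᵀ (W̃ Λ^{1/2})). -/
def Vlyap {n N m : ℕ} (γ : ℝ) (P : Matrix (Fin n) (Fin n) ℝ)
    (Lhalf : Matrix (Fin m) (Fin m) ℝ) (e : Fin n → ℝ) (W : Matrix (Fin N) (Fin m) ℝ) : ℝ :=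
  e ⬝ᵥ (P *ᵥ e) + γ⁻¹ * ((W * Lhalf)ᵀ * (W * Lhalf)).trace

/-- The augmented Lyapunov function V* of Theorem 5.1. -/
def Vstar {n N m : ℕ} (γ κ η ξ : ℝ) (P R : Matrix (Fin n) (Fin n) ℝ)
    (hP : P.IsHermitian) (hR : R.IsHermitian)
    (Lhalf : Matrix (Fin m) (Fin m) ℝ)
    (e : Fin n → ℝ) (W : Matrix (Fin N) (Fin m) ℝ) (eL xt : Fin n → ℝ) : ℝ :=
  Vlyap γ P Lhalf e W + η⁻¹ * κ * (eL ⬝ᵥ (P *ᵥ eL))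
    + 2 * ξ * κ⁻¹ * (lamMax hP)⁻¹ * lamMin hR * (xt ⬝ᵥ (P *ᵥ xt))

/-!
Differentiating `V*` along the error dynamics, the Lyapunov equation turns the derivative of each
quadratic form `vᵀPv` into `-vᵀRv` plus twice a cross term. The adaptive law makes the trace term
cancel the `ΛW̃ᵀσ` term of `ė`, and the weight `η⁻¹κ` makes the cross term of `e_L` combine with
the `-κ(e - e_L)` term of `ė` into `-2κ(e - e_L)ᵀP(e - e_L)`. Young's inequality absorbs the
remaining cross term `2cκ x̃ᵀP(e - e_L)` at the price `κc²/2 · x̃ᵀPx̃ ≤ ξ c λ_min(R)‖x̃‖²`, which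
leaves the factor `1 - ξ`; the bounds `λ_min(R)‖v‖² ≤ vᵀRv` and `vᵀPv ≤ λ_max(P)‖v‖²` finish.
-/

section Calculus

variable {ι κ : Type*} [Fintype ι] {t : ℝ}

theorem HasDerivAt.dotProduct {u v : ℝ → ι → ℝ} {u' v' : ι → ℝ}
    (hu : HasDerivAt u u' t) (hv : HasDerivAt v v' t) :
    HasDerivAt (fun s => u s ⬝ᵥ v s) (u' ⬝ᵥ v t + u t ⬝ᵥ v') t := by
  have h : HasDerivAt (fun s => ∑ i, u s i * v s i) (∑ i, (u' i * v t i + u t i * v' i)) t :=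
    HasDerivAt.fun_sum fun i _ => (hasDerivAt_pi.mp hu i).fun_mul (hasDerivAt_pi.mp hv i)
  rwa [Finset.sum_add_distrib] at h

theorem HasDerivAt.mulVec (A : Matrix κ ι ℝ) {v : ℝ → ι → ℝ} {v' : ι → ℝ}
    (hv : HasDerivAt v v' t) : HasDerivAt (fun s => A *ᵥ v s) (A *ᵥ v') t :=
  hasDerivAt_pi.mpr fun k => HasDerivAt.fun_sum fun i _ => (hasDerivAt_pi.mp hv i).const_mul (A k i)

theorem hasDerivAt_dotProduct_mulVec_self_of_lyapunov {A P R : Matrix ι ι ℝ} (hP : P.IsSymm)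
    (hLyap : Aᵀ * P + P * A + R = 0) {x : ℝ → ι → ℝ} {z : ι → ℝ}
    (hx : HasDerivAt x (A *ᵥ x t + z) t) :
    HasDerivAt (fun s => x s ⬝ᵥ (P *ᵥ x s))
      (-(x t ⬝ᵥ (R *ᵥ x t)) + 2 * (x t ⬝ᵥ (P *ᵥ z))) t := by
  refine (hx.dotProduct (hx.mulVec P)).congr_deriv ?_
  have hR : Aᵀ * P + P * A = -R := (neg_eq_of_add_eq_zero_left hLyap).symm
  have hsymm : ∀ y, y ⬝ᵥ (P *ᵥ x t) = x t ⬝ᵥ (P *ᵥ y) := fun y => by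
    rw [dotProduct_mulVec, ← mulVec_transpose, hP.eq, dotProduct_comm]
  have hA : (A *ᵥ x t) ⬝ᵥ (P *ᵥ x t) + x t ⬝ᵥ (P *ᵥ (A *ᵥ x t)) = -(x t ⬝ᵥ (R *ᵥ x t)) := by
    rw [← dotProduct_neg, ← neg_mulVec, ← hR, add_mulVec, dotProduct_add, ← mulVec_mulVec,
      ← mulVec_mulVec, dotProduct_mulVec (x t) Aᵀ, vecMul_transpose]
  rw [hsymm] at hA ⊢
  rw [mulVec_add, dotProduct_add]
  linarith

theorem hasDerivAt_mul_const_apply {μ : Type*} {W : ℝ → Matrix κ ι ℝ} {W' : Matrix κ ι ℝ}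
    (hW : ∀ k i, HasDerivAt (fun s => W s k i) (W' k i) t) (L : Matrix ι μ ℝ) (k : κ) (j : μ) :
    HasDerivAt (fun s => (W s * L) k j) ((W' * L) k j) t :=
  HasDerivAt.fun_sum fun i _ => (hW k i).mul_const (L i j)

theorem hasDerivAt_trace_transpose_mul_self [Fintype κ] {X : ℝ → Matrix κ ι ℝ}
    {X' : Matrix κ ι ℝ} (hX : ∀ k i, HasDerivAt (fun s => X s k i) (X' k i) t) :
    HasDerivAt (fun s => ((X s)ᵀ * X s).trace) (2 * ((X t)ᵀ * X').trace) t := by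
  have h : HasDerivAt (fun s => ∑ i, ∑ k, X s k i * X s k i)
      (∑ i, ∑ k, (X' k i * X t k i + X t k i * X' k i)) t :=
    HasDerivAt.fun_sum fun i _ => HasDerivAt.fun_sum fun k _ => (hX k i).fun_mul (hX k i)
  refine h.congr_deriv ?_
  simp only [Matrix.trace, diag, mul_apply, transpose_apply, Finset.mul_sum]
  exact Finset.sum_congr rfl fun _ _ => Finset.sum_congr rfl fun _ _ => by ring

end Calculus

theorem Matrix.IsSymm.trace_mul_vecMulVec_mul {κ μ : Type*} [Fintype κ] [Fintype μ]
    {L : Matrix μ μ ℝ} (hL : L.IsSymm) (W : Matrix κ μ ℝ) (σ : κ → ℝ) (p : μ → ℝ) :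
    ((W * L)ᵀ * (vecMulVec σ p * L)).trace = p ⬝ᵥ ((L * L * Wᵀ) *ᵥ σ) := by
  rw [vecMulVec_mul, mul_vecMulVec, trace_vecMulVec, transpose_mul, hL.eq, dotProduct_comm,
    ← dotProduct_mulVec, mulVec_mulVec, Matrix.mul_assoc]

theorem hasDerivAt_Vstar {n N m : ℕ} {Ar P R : Matrix (Fin n) (Fin n) ℝ}
    {B : Matrix (Fin n) (Fin m) ℝ} {Lam Lhalf : Matrix (Fin m) (Fin m) ℝ}
    (hP : P.IsHermitian) (hR : R.IsHermitian)
    (hLhalf : Lhalf.IsSymm) (hLhalfSq : Lhalf * Lhalf = Lam) (hLyap : Arᵀ * P + P * Ar + R = 0)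
    {γ κ η ξ t : ℝ} (hγ : γ ≠ 0) (hη : η ≠ 0) {σ : Fin N → ℝ} {e eL xt : ℝ → Fin n → ℝ}
    {W : ℝ → Matrix (Fin N) (Fin m) ℝ}
    (he : HasDerivAt e (Ar *ᵥ e t - (B * Lam * (W t)ᵀ) *ᵥ σ - κ • (e t - eL t)) t)
    (hW : ∀ i j, HasDerivAt (fun s => W s i j) (γ * (σ i * ((e t) ᵥ* (P * B)) j)) t)
    (heL : HasDerivAt eL (Ar *ᵥ eL t + η • (e t - eL t)) t)
    (hxt : HasDerivAt xt (Ar *ᵥ xt t + κ • (e t - eL t)) t) :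
    let c := 2 * ξ * κ⁻¹ * (lamMax hP)⁻¹ * lamMin hR
    let d := e t - eL t
    HasDerivAt (fun s => Vstar γ κ η ξ P R hP hR Lhalf (e s) (W s) (eL s) (xt s))
      (-(e t ⬝ᵥ (R *ᵥ e t)) - η⁻¹ * κ * (eL t ⬝ᵥ (R *ᵥ eL t))
        + (-(c * (xt t ⬝ᵥ (R *ᵥ xt t))) - 2 * κ * (d ⬝ᵥ (P *ᵥ d))
          + 2 * c * κ * (xt t ⬝ᵥ (P *ᵥ d)))) t := by
  intro c d
  have hPs : P.IsSymm := isHermitian_iff_isSymm.mp hP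
  set g := (B * Lam * (W t)ᵀ) *ᵥ σ
  set p := e t ᵥ* (P * B)
  have h1 := hasDerivAt_dotProduct_mulVec_self_of_lyapunov hPs hLyap (z := -(g + κ • d))
    (by rwa [← sub_eq_add_neg, ← sub_sub])
  have h2 := hasDerivAt_trace_transpose_mul_self (X' := γ • vecMulVec σ p * Lhalf)
    (hasDerivAt_mul_const_apply hW Lhalf)
  have h3 := hasDerivAt_dotProduct_mulVec_self_of_lyapunov hPs hLyap heL
  have h4 := hasDerivAt_dotProduct_mulVec_self_of_lyapunov hPs hLyap hxt
  unfold Vstar Vlyap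
  refine (((h1.fun_add (h2.const_mul γ⁻¹)).fun_add (h3.const_mul (η⁻¹ * κ))).fun_add
    (h4.const_mul c)).congr_deriv ?_
  have hgrad : e t ⬝ᵥ (P *ᵥ g) = p ⬝ᵥ ((Lam * (W t)ᵀ) *ᵥ σ) := by
    simp only [g, p, dotProduct_mulVec, vecMul_vecMul, Matrix.mul_assoc]
  have htrace : ((W t * Lhalf)ᵀ * (γ • vecMulVec σ p * Lhalf)).trace
      = γ * e t ⬝ᵥ (P *ᵥ g) := by
    rw [Matrix.smul_mul, Matrix.mul_smul, trace_smul, hLhalf.trace_mul_vecMulVec_mul (W t) σ p,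
      hLhalfSq, hgrad, smul_eq_mul]
  simp only [htrace, d, mulVec_neg, mulVec_add, mulVec_sub, mulVec_smul, dotProduct_neg,
    dotProduct_add, dotProduct_sub, sub_dotProduct, dotProduct_smul, smul_eq_mul]
  field_simp
  ring

section Spectral

variable {ι : Type*} [Fintype ι]

theorem Matrix.IsHermitian.posSemidef_sub_smul_one [DecidableEq ι] {A : Matrix ι ι ℝ}
    (hA : A.IsHermitian) {c : ℝ} (hc : ∀ i, c ≤ hA.eigenvalues i) : (A - c • 1).PosSemidef := by
  rw [posSemidef_iff_isHermitian_and_spectrum_nonneg]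
  refine ⟨hA.sub (isHermitian_one.smul (IsSelfAdjoint.all c)), ?_⟩
  rw [← Algebra.algebraMap_eq_smul_one, ← spectrum.sub_singleton_eq,
    hA.spectrum_real_eq_range_eigenvalues]
  rintro _ ⟨_, ⟨i, rfl⟩, _, rfl, rfl⟩
  exact sub_nonneg.mpr (hc i)

theorem Matrix.IsHermitian.posSemidef_smul_one_sub [DecidableEq ι] {A : Matrix ι ι ℝ}
    (hA : A.IsHermitian) {c : ℝ} (hc : ∀ i, hA.eigenvalues i ≤ c) : (c • 1 - A).PosSemidef := by
  rw [posSemidef_iff_isHermitian_and_spectrum_nonneg]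
  refine ⟨(isHermitian_one.smul (IsSelfAdjoint.all c)).sub hA, ?_⟩
  rw [← Algebra.algebraMap_eq_smul_one, ← spectrum.singleton_sub_eq,
    hA.spectrum_real_eq_range_eigenvalues]
  rintro _ ⟨_, rfl, _, ⟨i, rfl⟩, rfl⟩
  exact sub_nonneg.mpr (hc i)

theorem Matrix.PosSemidef.two_mul_dotProduct_mulVec_le {P : Matrix ι ι ℝ} (hP : P.PosSemidef)
    (x y : ι → ℝ) : 2 * (x ⬝ᵥ (P *ᵥ y)) ≤ x ⬝ᵥ (P *ᵥ x) + y ⬝ᵥ (P *ᵥ y) := by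
  have h := hP.dotProduct_mulVec_nonneg (x - y)
  have hsymm : y ⬝ᵥ (P *ᵥ x) = x ⬝ᵥ (P *ᵥ y) := by
    rw [dotProduct_mulVec, ← mulVec_transpose, (isHermitian_iff_isSymm.mp hP.1).eq,
      dotProduct_comm]
  simp only [star_trivial, mulVec_sub, dotProduct_sub, sub_dotProduct, hsymm] at h
  linarith

end Spectral

section Eigenvalues

variable {n : ℕ}

theorem norm2_sq (x : Fin n → ℝ) : norm2 x ^ 2 = x ⬝ᵥ x := by
  rw [norm2, Real.sq_sqrt (Finset.sum_nonneg fun i _ => sq_nonneg (x i))]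
  simp only [dotProduct, sq]

theorem lamMin_mul_norm2_sq_le {A : Matrix (Fin n) (Fin n) ℝ} (hA : A.IsHermitian)
    (x : Fin n → ℝ) : lamMin hA * norm2 x ^ 2 ≤ x ⬝ᵥ (A *ᵥ x) := by
  have h := (hA.posSemidef_sub_smul_one (c := lamMin hA) fun i =>
    ciInf_le (Set.finite_range hA.eigenvalues).bddBelow i).dotProduct_mulVec_nonneg x
  simp only [star_trivial, sub_mulVec, smul_mulVec, one_mulVec, dotProduct_sub,
    dotProduct_smul, smul_eq_mul] at h
  rw [norm2_sq]
  linarith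

theorem dotProduct_mulVec_le_lamMax_mul {A : Matrix (Fin n) (Fin n) ℝ} (hA : A.IsHermitian)
    (x : Fin n → ℝ) : x ⬝ᵥ (A *ᵥ x) ≤ lamMax hA * norm2 x ^ 2 := by
  have h := (hA.posSemidef_smul_one_sub (c := lamMax hA) fun i =>
    le_ciSup (Set.finite_range hA.eigenvalues).bddAbove i).dotProduct_mulVec_nonneg x
  simp only [star_trivial, sub_mulVec, smul_mulVec, one_mulVec, dotProduct_sub,
    dotProduct_smul, smul_eq_mul] at h
  rw [norm2_sq]
  linarith

theorem lamMin_nonneg {A : Matrix (Fin n) (Fin n) ℝ} (hA : A.PosSemidef) : 0 ≤ lamMin hA.1 :=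
  Real.iInf_nonneg hA.eigenvalues_nonneg

theorem lamMax_nonneg {A : Matrix (Fin n) (Fin n) ℝ} (hA : A.PosSemidef) : 0 ≤ lamMax hA.1 :=
  Real.iSup_nonneg hA.eigenvalues_nonneg

theorem cross_term_le {P R : Matrix (Fin n) (Fin n) ℝ} (hP : P.PosSemidef) (hR : R.IsHermitian)
    {c κ : ℝ} (hc : 0 ≤ c) (hκ : 0 ≤ κ) (x d : Fin n → ℝ) :
    -(c * (x ⬝ᵥ (R *ᵥ x))) - 2 * κ * (d ⬝ᵥ (P *ᵥ d)) + 2 * c * κ * (x ⬝ᵥ (P *ᵥ d))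
      ≤ -(c * lamMin hR - κ * c ^ 2 * lamMax hP.1 / 2) * norm2 x ^ 2 := by
  have hamgm := hP.two_mul_dotProduct_mulVec_le ((c / 2) • x) d
  simp only [smul_dotProduct, mulVec_smul, dotProduct_smul, smul_eq_mul] at hamgm
  have hR' := mul_le_mul_of_nonneg_left (lamMin_mul_norm2_sq_le hR x) hc
  have hP' := mul_le_mul_of_nonneg_left (dotProduct_mulVec_le_lamMax_mul hP.1 x)
    (by positivity : 0 ≤ κ * c ^ 2 / 2)
  have hamgm' := mul_le_mul_of_nonneg_left hamgm (by positivity : 0 ≤ 2 * κ)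
  linarith

end Eigenvalues

theorem statement5_general
    {n N m : ℕ}
    (Ar : Matrix (Fin n) (Fin n) ℝ) (B : Matrix (Fin n) (Fin m) ℝ)
    (Lam Lhalf : Matrix (Fin m) (Fin m) ℝ) (R P : Matrix (Fin n) (Fin n) ℝ)
    (hLhalfDiag : Lhalf.IsDiag) (hLhalfSq : Lhalf * Lhalf = Lam)
    (hR : R.PosDef) (hP : P.PosDef)
    (hLyap : Arᵀ * P + P * Ar + R = 0)
    (γ κ η ξ : ℝ) (hγ : 0 < γ) (hκ : 0 < κ) (hη : 0 < η) (hξ0 : 0 < ξ) (hξ1 : ξ < 1)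
    (σx : ℝ → Fin N → ℝ)
    (e eL xt : ℝ → Fin n → ℝ) (Wt : ℝ → Matrix (Fin N) (Fin m) ℝ)
    (he : ∀ t ≥ (0:ℝ), HasDerivAt e
          (Ar *ᵥ e t - (B * Lam * (Wt t)ᵀ) *ᵥ σx t - κ • (e t - eL t)) t)
    (hW : ∀ t ≥ (0:ℝ), ∀ i j, HasDerivAt (fun s => Wt s i j)
          (γ * (σx t i * ((e t) ᵥ* (P * B)) j)) t)
    (heL : ∀ t ≥ (0:ℝ), HasDerivAt eL (Ar *ᵥ eL t + η • (e t - eL t)) t)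
    (hxt : ∀ t ≥ (0:ℝ), HasDerivAt xt (Ar *ᵥ xt t + κ • (e t - eL t)) t)
    : ∀ t ≥ (0:ℝ),
      deriv (fun s => Vstar γ κ η ξ P R hP.1 hR.1 Lhalf (e s) (Wt s) (eL s) (xt s)) t
        ≤ -(lamMin hR.1) * norm2 (e t) ^ 2 - η⁻¹ * κ * lamMin hR.1 * norm2 (eL t) ^ 2
          - 2 * ξ * κ⁻¹ * lamMin hR.1 ^ 2 * (lamMax hP.1)⁻¹ * (1 - ξ) * norm2 (xt t) ^ 2
      ∧ -(lamMin hR.1) * norm2 (e t) ^ 2 - η⁻¹ * κ * lamMin hR.1 * norm2 (eL t) ^ 2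
          - 2 * ξ * κ⁻¹ * lamMin hR.1 ^ 2 * (lamMax hP.1)⁻¹ * (1 - ξ) * norm2 (xt t) ^ 2 ≤ 0 := by
  intro t ht
  rw [(hasDerivAt_Vstar hP.1 hR.1 hLhalfDiag.isSymm hLhalfSq hLyap hγ.ne' hη.ne' (he t ht)
    (hW t ht) (heL t ht) (hxt t ht)).deriv]
  have hlR : 0 ≤ lamMin hR.1 := lamMin_nonneg hR.posSemidef
  have hlP : 0 ≤ lamMax hP.1 := lamMax_nonneg hP.posSemidef
  have hcross := cross_term_le hP.posSemidef hR.1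
    (c := 2 * ξ * κ⁻¹ * (lamMax hP.1)⁻¹ * lamMin hR.1) (by positivity) hκ.le (xt t) (e t - eL t)
  set lR := lamMin hR.1
  set lP := lamMax hP.1
  set c := 2 * ξ * κ⁻¹ * lP⁻¹ * lR
  have hrate : c * lR - κ * c ^ 2 * lP / 2 = 2 * ξ * κ⁻¹ * lR ^ 2 * lP⁻¹ * (1 - ξ) := by
    rcases eq_or_ne lP 0 with hlP0 | hlP0
    -- `lP = 0` only when `n = 0`; then `c = 0` as well, since `0⁻¹ = 0`
    · simp [c, hlP0]
    · simp only [c]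
      field_simp
  rw [hrate] at hcross
  have hRe := lamMin_mul_norm2_sq_le hR.1 (e t)
  have hReL := mul_le_mul_of_nonneg_left (lamMin_mul_norm2_sq_le hR.1 (eL t))
    (by positivity : 0 ≤ η⁻¹ * κ)
  have hx : 0 ≤ 2 * ξ * κ⁻¹ * lR ^ 2 * lP⁻¹ * (1 - ξ) * norm2 (xt t) ^ 2 := by
    have := sub_nonneg.mpr hξ1.le
    positivity
  have he' : 0 ≤ lR * norm2 (e t) ^ 2 := by positivity
  have heL' : 0 ≤ η⁻¹ * κ * lR * norm2 (eL t) ^ 2 := by positivity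
  constructor <;> linarith

theorem statement5
    {n N m : ℕ} (hn : 0 < n) (hN : 0 < N) (hm : 0 < m)
    (Ar : Matrix (Fin n) (Fin n) ℝ) (B : Matrix (Fin n) (Fin m) ℝ)
    (Lam Lhalf : Matrix (Fin m) (Fin m) ℝ) (R P : Matrix (Fin n) (Fin n) ℝ)
    (hAr : Hurwitz Ar)
    (hLam : Lam.PosDef) (hLamDiag : Lam.IsDiag)
    (hLhalfDiag : Lhalf.IsDiag) (hLhalfSq : Lhalf * Lhalf = Lam)
    (hR : R.PosDef) (hP : P.PosDef)
    (hLyap : Arᵀ * P + P * Ar + R = 0)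
    (γ κ η ξ : ℝ) (hγ : 0 < γ) (hκ : 0 < κ) (hη : 0 < η) (hξ0 : 0 < ξ) (hξ1 : ξ < 1)
    (σx : ℝ → Fin N → ℝ)
    (e eL xt : ℝ → Fin n → ℝ) (Wt : ℝ → Matrix (Fin N) (Fin m) ℝ)
    (heL0 : eL 0 = 0) (hxt0 : xt 0 = 0)
    (he : ∀ t ≥ (0:ℝ), HasDerivAt e
          (Ar *ᵥ e t - (B * Lam * (Wt t)ᵀ) *ᵥ σx t - κ • (e t - eL t)) t)
    (hW : ∀ t ≥ (0:ℝ), ∀ i j, HasDerivAt (fun s => Wt s i j)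
          (γ * (σx t i * ((e t) ᵥ* (P * B)) j)) t)
    (heL : ∀ t ≥ (0:ℝ), HasDerivAt eL (Ar *ᵥ eL t + η • (e t - eL t)) t)
    (hxt : ∀ t ≥ (0:ℝ), HasDerivAt xt (Ar *ᵥ xt t + κ • (e t - eL t)) t)
    : ∀ t ≥ (0:ℝ),
      deriv (fun s => Vstar γ κ η ξ P R hP.1 hR.1 Lhalf (e s) (Wt s) (eL s) (xt s)) t
        ≤ -(lamMin hR.1) * norm2 (e t) ^ 2 - η⁻¹ * κ * lamMin hR.1 * norm2 (eL t) ^ 2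
          - 2 * ξ * κ⁻¹ * lamMin hR.1 ^ 2 * (lamMax hP.1)⁻¹ * (1 - ξ) * norm2 (xt t) ^ 2
      ∧ -(lamMin hR.1) * norm2 (e t) ^ 2 - η⁻¹ * κ * lamMin hR.1 * norm2 (eL t) ^ 2
          - 2 * ξ * κ⁻¹ * lamMin hR.1 ^ 2 * (lamMax hP.1)⁻¹ * (1 - ξ) * norm2 (xt t) ^ 2 ≤ 0 :=
  statement5_general Ar B Lam Lhalf R P hLhalfDiag hLhalfSq hR hP hLyap γ κ η ξ hγ hκ hη hξ0 hξ1 σx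
    e eL xt Wt he hW heL hxt
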